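/- Let n, K : ℕ, let S be a Lagrangian F₂-subspace of V = (F₂×F₂)ⁿ, let φ ∈ ℂ^{F₂ⁿ} be a unit vector admitting a function ε : S → ℂ with E(s)·φ = ε(s)·φ for all s ∈ S, and let t : Fin K → V satisfy t_i + t_j ∉ S for all i ≠ j. Then the vectors ψ_i = E(t_i)·φ form an orthonormal family: ⟨ψ_i, ψ_j⟩ = 1 if i = j and 0 if i ≠ j. -/

import Mathlib

open Matrix

/-- The Pauli matrix `E(v)` for `v = (a|b) ∈ (F₂×F₂)ⁿ`: the `2ⁿ × 2ⁿ` complex matrix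
with `(x, y)` entry `(-1)^{b·y}` if `x = y + a` and `0` otherwise. -/
def PauliV {n : ℕ} (v : Fin n → ZMod 2 × ZMod 2) :
    Matrix (Fin n → ZMod 2) (Fin n → ZMod 2) ℂ :=
  Matrix.of fun x y =>
    if x = y + (fun k => (v k).1) then (-1 : ℂ) ^ (∑ k, ((v k).2 * y k).val) else 0

/-- The symplectic inner product `⟨v,v'⟩ = Σ_k (a_k b'_k + a'_k b_k) ∈ F₂`. -/
def sympl {n : ℕ} (v v' : Fin n → ZMod 2 × ZMod 2) : ZMod 2 :=
  ∑ k, ((v k).1 * (v' k).2 + (v' k).1 * (v k).2)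

/-!
Pauli matrices are unitary, so every `ψ_i` is a unit vector. For `i ≠ j`, `E(t_i)ᴴ E(t_j)` is a
scalar multiple of `E(u)` with `u = t_i + t_j ∉ S`. A Lagrangian subspace is its own symplectic
complement, so some `s ∈ S` has `⟨s, u⟩ = 1`, i.e. `E(s)` anticommutes with `E(u)`. As `φ` is an
eigenvector of the unitary `E(s)`, with an eigenvalue of modulus one,
`⟨φ, E(u)φ⟩ = ⟨E(s)φ, E(s)E(u)φ⟩ = -⟨φ, E(u)φ⟩`, which vanishes.
-/

section UnitaryMatrix

variable {k l m R : Type*} [Fintype k] [Fintype l] [Fintype m]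

lemma Matrix.star_mulVec_dotProduct_mulVec [NonUnitalSemiring R] [StarRing R]
    (A : Matrix m k R) (B : Matrix m l R) (φ : k → R) (ψ : l → R) :
    star (A *ᵥ φ) ⬝ᵥ B *ᵥ ψ = star φ ⬝ᵥ (Aᴴ * B) *ᵥ ψ := by
  rw [star_mulVec, ← dotProduct_mulVec, mulVec_mulVec]

variable [DecidableEq m] [CommRing R] [IsDomain R] [CharZero R] [StarRing R]

lemma Matrix.dotProduct_mulVec_eq_zero_of_anticommute {U A : Matrix m m R}
    (hU : U ∈ unitaryGroup m R) (hUA : U * A = -(A * U)) {φ : m → R} {ε : R}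
    (hφ : U *ᵥ φ = ε • φ) (hφ₀ : star φ ⬝ᵥ φ ≠ 0) : star φ ⬝ᵥ A *ᵥ φ = 0 := by
  have hUU : Uᴴ * U = 1 := (mem_unitaryGroup_iff' ..).mp hU
  have hε : star ε * ε = 1 := by
    have h := star_mulVec_dotProduct_mulVec U U φ φ
    rw [hUU, one_mulVec, hφ, star_smul, smul_dotProduct, dotProduct_smul, smul_smul,
      smul_eq_mul] at h
    exact mul_right_cancel₀ hφ₀ (h.trans (one_mul _).symm)
  have h := star_mulVec_dotProduct_mulVec U (U * A) φ φ
  rw [← Matrix.mul_assoc, hUU, Matrix.one_mul, hUA, neg_mulVec, ← mulVec_mulVec, hφ,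
    mulVec_smul, star_smul, smul_dotProduct, dotProduct_neg, dotProduct_smul, smul_neg,
    smul_smul, smul_eq_mul, hε, one_mul] at h
  exact self_eq_neg.mp h.symm

end UnitaryMatrix

open Module in
lemma LinearMap.BilinForm.orthogonal_eq_self_of_le_orthogonal {K V : Type*} [Field K]
    [AddCommGroup V] [Module K V] [FiniteDimensional K V] {B : LinearMap.BilinForm K V}
    (hB : B.Nondegenerate) {W : Submodule K V} (hW : W ≤ B.orthogonal W)
    (hdim : finrank K V = 2 * finrank K W) : B.orthogonal W = W :=
  (Submodule.eq_of_le_of_finrank_le hW (by rw [finrank_orthogonal hB, hdim]; omega)).symm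

def signChar : AddChar (ZMod 2) ℂ := AddChar.zmodChar 2 (ζ := -1) (by norm_num)

lemma signChar_apply (a : ZMod 2) : signChar a = (-1) ^ a.val := rfl

lemma signChar_natCast (k : ℕ) : signChar k = (-1) ^ k := AddChar.zmodChar_apply' _ k

lemma signChar_one : signChar 1 = -1 := by
  rw [signChar_apply, ZMod.val_one, pow_one]

lemma signChar_mul_self (a : ZMod 2) : signChar a * signChar a = 1 := by
  rw [← AddChar.map_add_eq_mul, CharTwo.add_self_eq_zero, AddChar.map_zero_eq_one]

lemma star_signChar (a : ZMod 2) : star (signChar a) = signChar a := by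
  rw [signChar_apply, star_pow, star_neg, star_one]

section Pauli

variable {n : ℕ}

-- For `v = (a|b)`, `xPart v = a` and `zPart v = b`.
def xPart (v : Fin n → ZMod 2 × ZMod 2) : Fin n → ZMod 2 := fun k => (v k).1

def zPart (v : Fin n → ZMod 2 × ZMod 2) : Fin n → ZMod 2 := fun k => (v k).2

@[simp] lemma xPart_add (v w : Fin n → ZMod 2 × ZMod 2) : xPart (v + w) = xPart v + xPart w :=
  rfl

@[simp] lemma zPart_add (v w : Fin n → ZMod 2 × ZMod 2) : zPart (v + w) = zPart v + zPart w :=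
  rfl

@[simp] lemma xPart_smul (c : ZMod 2) (v : Fin n → ZMod 2 × ZMod 2) :
    xPart (c • v) = c • xPart v :=
  rfl

@[simp] lemma zPart_smul (c : ZMod 2) (v : Fin n → ZMod 2 × ZMod 2) :
    zPart (c • v) = c • zPart v :=
  rfl

@[simp] lemma xPart_zero : xPart (0 : Fin n → ZMod 2 × ZMod 2) = 0 := rfl

@[simp] lemma zPart_zero : zPart (0 : Fin n → ZMod 2 × ZMod 2) = 0 := rfl

lemma sympl_eq (v w : Fin n → ZMod 2 × ZMod 2) :
    sympl v w = zPart v ⬝ᵥ xPart w + zPart w ⬝ᵥ xPart v := by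
  simp only [sympl, dotProduct, xPart, zPart, ← Finset.sum_add_distrib]
  exact Finset.sum_congr rfl fun _ _ => by ring

lemma PauliV_apply (v : Fin n → ZMod 2 × ZMod 2) (x y : Fin n → ZMod 2) :
    PauliV v x y = if x = y + xPart v then signChar (zPart v ⬝ᵥ y) else 0 := by
  have hsign : (-1 : ℂ) ^ (∑ k, ((v k).2 * y k).val) = signChar (zPart v ⬝ᵥ y) := by
    rw [← signChar_natCast, Nat.cast_sum]
    simp only [ZMod.natCast_zmod_val]
    rfl
  rw [PauliV, of_apply, hsign]
  rfl

lemma PauliV_zero : PauliV (0 : Fin n → ZMod 2 × ZMod 2) = 1 := by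
  ext x y
  simp [PauliV_apply, one_apply]

lemma PauliV_mul_PauliV (v w : Fin n → ZMod 2 × ZMod 2) :
    PauliV v * PauliV w = signChar (zPart v ⬝ᵥ xPart w) • PauliV (v + w) := by
  ext x z
  simp only [mul_apply, PauliV_apply, mul_ite, mul_zero, Finset.sum_ite_eq', Finset.mem_univ,
    if_true, Matrix.smul_apply, smul_eq_mul, xPart_add, zPart_add, ← add_assoc, ite_mul, zero_mul,
    add_right_comm z (xPart w)]
  split_ifs
  · rw [dotProduct_add, add_dotProduct, AddChar.map_add_eq_mul, AddChar.map_add_eq_mul]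
    ring
  · rfl

lemma conjTranspose_PauliV (v : Fin n → ZMod 2 × ZMod 2) :
    (PauliV v)ᴴ = signChar (zPart v ⬝ᵥ xPart v) • PauliV v := by
  ext x y
  rw [conjTranspose_apply, Matrix.smul_apply, PauliV_apply, PauliV_apply, smul_eq_mul]
  have hiff : y = x + xPart v ↔ x = y + xPart v := by
    constructor <;> rintro rfl <;> rw [add_assoc, ZModModule.add_self, add_zero]
  by_cases h : x = y + xPart v
  · rw [if_pos (hiff.mpr h), if_pos h, star_signChar, h, dotProduct_add, AddChar.map_add_eq_mul,
      mul_comm]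
  · rw [if_neg (hiff.not.mpr h), if_neg h, star_zero, mul_zero]

lemma PauliV_mem_unitaryGroup (v : Fin n → ZMod 2 × ZMod 2) :
    PauliV v ∈ unitaryGroup (Fin n → ZMod 2) ℂ := by
  rw [mem_unitaryGroup_iff', star_eq_conjTranspose, conjTranspose_PauliV, smul_mul_assoc,
    PauliV_mul_PauliV, smul_smul, signChar_mul_self, one_smul, ZModModule.add_self,
    PauliV_zero]

lemma PauliV_mul_comm (v w : Fin n → ZMod 2 × ZMod 2) :
    PauliV v * PauliV w = signChar (sympl v w) • (PauliV w * PauliV v) := by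
  rw [PauliV_mul_PauliV, PauliV_mul_PauliV, smul_smul, sympl_eq, AddChar.map_add_eq_mul,
    mul_assoc, signChar_mul_self, mul_one, add_comm w]

lemma conjTranspose_PauliV_mul_PauliV (v w : Fin n → ZMod 2 × ZMod 2) :
    (PauliV v)ᴴ * PauliV w =
      signChar (zPart v ⬝ᵥ xPart v + zPart v ⬝ᵥ xPart w) • PauliV (v + w) := by
  rw [conjTranspose_PauliV, smul_mul_assoc, PauliV_mul_PauliV, smul_smul,
    AddChar.map_add_eq_mul]

end Pauli

section Symplectic

variable {n : ℕ}

def symplForm (n : ℕ) : LinearMap.BilinForm (ZMod 2) (Fin n → ZMod 2 × ZMod 2) :=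
  LinearMap.mk₂ (ZMod 2) sympl
    (fun _ _ _ => by
      simp only [sympl_eq, xPart_add, zPart_add, dotProduct_add, add_dotProduct]; abel)
    (fun _ _ _ => by
      simp only [sympl_eq, xPart_smul, zPart_smul, dotProduct_smul, smul_dotProduct, smul_add])
    (fun _ _ _ => by
      simp only [sympl_eq, xPart_add, zPart_add, dotProduct_add, add_dotProduct]; abel)
    (fun _ _ _ => by
      simp only [sympl_eq, xPart_smul, zPart_smul, dotProduct_smul, smul_dotProduct, smul_add])

lemma symplForm_apply (v w : Fin n → ZMod 2 × ZMod 2) : symplForm n v w = sympl v w := rfl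

lemma sympl_comm (v w : Fin n → ZMod 2 × ZMod 2) : sympl v w = sympl w v := by
  simp only [sympl, add_comm]

lemma sympl_single (v : Fin n → ZMod 2 × ZMod 2) (k : Fin n) (p : ZMod 2 × ZMod 2) :
    sympl v (Pi.single k p) = (v k).1 * p.2 + p.1 * (v k).2 := by
  rw [sympl, Finset.sum_eq_single k (fun j _ hj => by simp [Pi.single_eq_of_ne hj]) (by simp),
    Pi.single_eq_same]

lemma symplForm_nondegenerate : (symplForm n).Nondegenerate := by
  have hrefl : (symplForm n).IsRefl := fun v w h => by rwa [symplForm_apply, sympl_comm]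
  refine hrefl.nondegenerate_iff_separatingLeft.mpr fun v hv => funext fun k => ?_
  have hx := hv (Pi.single k (0, 1))
  have hz := hv (Pi.single k (1, 0))
  simp only [symplForm_apply, sympl_single] at hx hz
  simp_all [Prod.ext_iff]

lemma exists_sympl_eq_one_of_notMem {S : Submodule (ZMod 2) (Fin n → ZMod 2 × ZMod 2)}
    (hiso : ∀ s ∈ S, ∀ s' ∈ S, sympl s s' = 0) (hdim : Module.finrank (ZMod 2) S = n)
    {u : Fin n → ZMod 2 × ZMod 2} (hu : u ∉ S) : ∃ s ∈ S, sympl s u = 1 := by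
  have hS : (symplForm n).orthogonal S = S :=
    LinearMap.BilinForm.orthogonal_eq_self_of_le_orthogonal symplForm_nondegenerate
      (fun u hu s hs => hiso s hs u hu)
      (by simp [Module.finrank_pi_fintype, Module.finrank_prod, hdim]; ring)
  rw [← hS, LinearMap.BilinForm.mem_orthogonal_iff] at hu
  push Not at hu
  obtain ⟨s, hs, hsu⟩ := hu
  exact ⟨s, hs, (by decide : ∀ a : ZMod 2, a ≠ 0 → a = 1) _ hsu⟩

end Symplectic

/-- The codeword vectors `ψ_i = E(t_i)·φ` of a CWS code form an orthonormal family. -/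
theorem cws_codewords_orthonormal {n K : ℕ}
    (S : Submodule (ZMod 2) (Fin n → ZMod 2 × ZMod 2))
    (hiso : ∀ s ∈ S, ∀ s' ∈ S, sympl s s' = 0)
    (hdim : Module.finrank (ZMod 2) S = n)
    (φ : (Fin n → ZMod 2) → ℂ) (hunit : ∑ x, star (φ x) * φ x = 1)
    (ε : S → ℂ) (hε : ∀ s : S, (PauliV (s : Fin n → ZMod 2 × ZMod 2)).mulVec φ = ε s • φ)
    (t : Fin K → (Fin n → ZMod 2 × ZMod 2))
    (ht : ∀ i j, i ≠ j → t i + t j ∉ S) :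
    ∀ i j, ∑ x, star ((PauliV (t i)).mulVec φ x) * (PauliV (t j)).mulVec φ x =
      if i = j then 1 else 0 := by
  intro i j
  change star (PauliV (t i) *ᵥ φ) ⬝ᵥ PauliV (t j) *ᵥ φ = _
  change star φ ⬝ᵥ φ = 1 at hunit
  rw [star_mulVec_dotProduct_mulVec]
  split_ifs with hij
  · rw [hij, ← star_eq_conjTranspose,
      (mem_unitaryGroup_iff' ..).mp (PauliV_mem_unitaryGroup _), one_mulVec, hunit]
  · obtain ⟨s, hs, hsu⟩ := exists_sympl_eq_one_of_notMem hiso hdim (ht i j hij)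
    have hanti : PauliV s * PauliV (t i + t j) = -(PauliV (t i + t j) * PauliV s) := by
      rw [PauliV_mul_comm, hsu, signChar_one, neg_one_smul]
    rw [conjTranspose_PauliV_mul_PauliV, smul_mulVec, dotProduct_smul,
      dotProduct_mulVec_eq_zero_of_anticommute (PauliV_mem_unitaryGroup s) hanti (hε ⟨s, hs⟩)
        (hunit ▸ one_ne_zero), smul_zero]
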